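/- Let A be a finite nonempty set and a ∈ A. The log-softmax loss x ↦ ℓ(x, a) = −log(softmax(x)_a) is √2-Lipschitz on the Euclidean space ℝ^A: for all x, y : A → ℝ, |ℓ(x, a) − ℓ(y, a)| ≤ √2 · ‖x − y‖₂. -/

import Mathlib

open scoped BigOperators

/-- Softmax on a finite type: `softmax x a = exp (x a) / ∑ a', exp (x a')`. -/
noncomputable def softmax {A : Type*} [Fintype A] (x : A → ℝ) (a : A) : ℝ :=
  Real.exp (x a) / ∑ a', Real.exp (x a')

/-- Log-softmax loss: `ℓ(x, a) = -log (softmax x a)`. -/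
noncomputable def logSoftmaxLoss {A : Type*} [Fintype A] (x : A → ℝ) (a : A) : ℝ :=
  - Real.log (softmax x a)

/-!
With `d = x - y`, the log-sum-exp term changes by at most `d b` for a maximiser `b` of `d`,
since `exp (x c) = exp (y c) * exp (d c) ≤ exp (y c) * exp (d b)`. Hence
`ℓ(x, a) - ℓ(y, a) ≤ d b - d a`, and `(d b - d a)² ≤ 2 (d a² + d b²) ≤ 2 ‖d‖²` when `b ≠ a`.
Swapping `x` and `y` gives the other inequality.
-/

open Real Finset

section

variable {A : Type*} [Fintype A]

lemma sum_exp_pos [Nonempty A] (x : A → ℝ) : 0 < ∑ b, exp (x b) :=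
  sum_pos (fun _ _ => exp_pos _) univ_nonempty

lemma logSoftmaxLoss_eq_log_sum_exp_sub (x : A → ℝ) (a : A) :
    logSoftmaxLoss x a = log (∑ b, exp (x b)) - x a := by
  have : Nonempty A := ⟨a⟩
  rw [logSoftmaxLoss, softmax, log_div (exp_ne_zero _) (sum_exp_pos x).ne', log_exp]
  ring

lemma exists_log_sum_exp_sub_le [Nonempty A] (x y : A → ℝ) :
    ∃ b, log (∑ c, exp (x c)) - log (∑ c, exp (y c)) ≤ x b - y b := by
  obtain ⟨b, -, hb⟩ := exists_max_image univ (fun c => x c - y c) univ_nonempty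
  refine ⟨b, ?_⟩
  have hsum : ∑ c, exp (x c) ≤ exp (x b - y b) * ∑ c, exp (y c) := by
    rw [mul_sum]
    refine sum_le_sum fun c hc => ?_
    rw [← exp_add, exp_le_exp]
    linarith [hb c hc]
  rw [sub_le_iff_le_add, ← log_exp (x b - y b), ← log_mul (exp_ne_zero _) (sum_exp_pos y).ne']
  exact log_le_log (sum_exp_pos x) hsum

lemma EuclideanSpace.apply_sub_apply_le_sqrt_two_mul_norm (d : EuclideanSpace ℝ A) (a b : A) :
    d b - d a ≤ √2 * ‖d‖ := by
  classical
  by_cases hab : a = b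
  · subst hab
    simp only [sub_self]
    positivity
  have hpair : d a ^ 2 + d b ^ 2 ≤ ‖d‖ ^ 2 := by
    rw [EuclideanSpace.norm_sq_eq, ← sum_pair (f := fun c => d c ^ 2) hab]
    simp only [norm_eq_abs, sq_abs]
    exact sum_le_univ_sum_of_nonneg fun c => sq_nonneg (d c)
  calc d b - d a ≤ |d b - d a| := le_abs_self _
    _ ≤ √(2 * ‖d‖ ^ 2) := abs_le_sqrt (by nlinarith [sq_nonneg (d a + d b)])
    _ = √2 * ‖d‖ := by rw [sqrt_mul zero_le_two, sqrt_sq (norm_nonneg d)]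

lemma logSoftmaxLoss_sub_le (a : A) (x y : EuclideanSpace ℝ A) :
    logSoftmaxLoss x a - logSoftmaxLoss y a ≤ √2 * ‖x - y‖ := by
  have : Nonempty A := ⟨a⟩
  obtain ⟨b, hb⟩ := exists_log_sum_exp_sub_le x y
  have hd := (x - y).apply_sub_apply_le_sqrt_two_mul_norm a b
  simp only [PiLp.sub_apply] at hd
  rw [logSoftmaxLoss_eq_log_sum_exp_sub, logSoftmaxLoss_eq_log_sum_exp_sub]
  linarith

end

theorem logSoftmaxLoss_lipschitz_general {A : Type*} [Fintype A] (a : A)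
    (x y : EuclideanSpace ℝ A) :
    |logSoftmaxLoss x a - logSoftmaxLoss y a| ≤ Real.sqrt 2 * ‖x - y‖ := by
  rw [abs_sub_le_iff]
  exact ⟨logSoftmaxLoss_sub_le a x y, norm_sub_rev x y ▸ logSoftmaxLoss_sub_le a y x⟩

/-- The log-softmax loss `x ↦ ℓ(x, a)` is `√2`-Lipschitz on the Euclidean
space `ℝ^A`. -/
theorem logSoftmaxLoss_lipschitz {A : Type*} [Fintype A] [Nonempty A] (a : A)
    (x y : EuclideanSpace ℝ A) :
    |logSoftmaxLoss x a - logSoftmaxLoss y a| ≤ Real.sqrt 2 * ‖x - y‖ :=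
  logSoftmaxLoss_lipschitz_general a x y
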